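/- Consider a Markov reward process on states {s₀^(1),…,s₀^(k), s₁,…,s_{T−1}} plus terminal state ∅, with uniform initial distribution on {s₀^(1),…,s₀^(k)}, deterministic transitions s₀^(i) → s₁ → s₂ → ⋯ → s_{T−1} → ∅, and independent rewards uniform on [−1,1] at each state. Then the asymptotic variance of the Monte Carlo value estimator at state s₀^(1) equals kT/3, while the asymptotic variance of the TD estimator at s₀^(1) equals (k+T−1)/3. -/

import Mathlib

/-- Deterministic transition function of the layered MRP: each starting state
`s₀⁽ⁱ⁾` (left component) moves to `s₁`, and `s_j` moves to `s_{j+1}`, with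
`s_{T-1}` moving to the terminal state (`none`). -/
def layeredStep (k T : ℕ) : (Fin k ⊕ Fin (T - 1)) → Option (Fin k ⊕ Fin (T - 1))
  | Sum.inl _ => if h : 0 < T - 1 then some (Sum.inr ⟨0, h⟩) else none
  | Sum.inr j => if h : (j : ℕ) + 1 < T - 1 then some (Sum.inr ⟨(j : ℕ) + 1, h⟩) else none

/-- The (deterministic) trajectory of the layered MRP after `t` steps from `s`,
with `none` denoting the terminal state. -/
def layeredTraj (k T : ℕ) (s : Fin k ⊕ Fin (T - 1)) (t : ℕ) :
    Option (Fin k ⊕ Fin (T - 1)) :=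
  (fun o => Option.bind o (layeredStep k T))^[t] (some s)

/-- The occupancy measure of a state under the uniform initial distribution on
the `k` starting states. -/
noncomputable def layeredOcc (k T : ℕ) (s : Fin k ⊕ Fin (T - 1)) : ℝ :=
  ∑' t : ℕ, ∑ i : Fin k,
    (1 / (k : ℝ)) * (if layeredTraj k T (Sum.inl i) t = some s then 1 else 0)

/-- The number of visits to `s` starting from a given state `start`. -/
noncomputable def layeredVisits (k T : ℕ) (start s : Fin k ⊕ Fin (T - 1)) : ℝ :=
  ∑' t : ℕ, if layeredTraj k T start t = some s then (1 : ℝ) else 0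

/-!
From a starting state `s₀⁽ⁱ⁾` the chain is deterministic: it sits at `s₀⁽ⁱ⁾` at time `0`, at
`s_j` at time `j + 1`, and terminates after `T` steps. Hence every visit count from `s₀⁽ⁱ⁾` is
`0` or `1`, the episode has length `T`, and the occupancy measure is `1/k` at each starting
state and `1` along the shared chain. The MC variance is `T σ² / (1/k)`, while TD divides the
single visit to `s₀⁽¹⁾` by `1/k` and each of the `T - 1` shared visits by `1`.
-/

section

variable {k T : ℕ}

theorem layeredTraj_succ (s : Fin k ⊕ Fin (T - 1)) (t : ℕ) :
    layeredTraj k T s (t + 1) = (layeredTraj k T s t).bind (layeredStep k T) :=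
  Function.iterate_succ_apply' _ _ _

theorem layeredTraj_inl_succ (i : Fin k) (t : ℕ) :
    layeredTraj k T (.inl i) (t + 1) =
      if h : t < T - 1 then some (.inr ⟨t, h⟩) else none := by
  induction t with
  | zero => rfl
  | succ t ih =>
    rw [layeredTraj_succ, ih]
    by_cases h : t < T - 1
    · simp only [h, dite_true, Option.bind_some, layeredStep]
    · simp only [h, dite_false, Option.bind_none]
      rw [dif_neg (by omega)]

theorem layeredTraj_inl_eq_inl_iff (i i' : Fin k) (t : ℕ) :
    layeredTraj k T (.inl i) t = some (.inl i') ↔ t = 0 ∧ i = i' := by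
  cases t with
  | zero => simp [layeredTraj]
  | succ t =>
    rw [layeredTraj_inl_succ]
    split <;> simp

theorem layeredTraj_inl_eq_inr_iff (i : Fin k) (j : Fin (T - 1)) (t : ℕ) :
    layeredTraj k T (.inl i) t = some (.inr j) ↔ t = j + 1 := by
  cases t with
  | zero => simp [layeredTraj]
  | succ t =>
    rw [layeredTraj_inl_succ]
    split
    · simp [Fin.ext_iff, eq_comm]
    · simp only [reduceCtorEq, false_iff]
      omega

theorem layeredVisits_inl_inl (i i' : Fin k) :
    layeredVisits k T (.inl i) (.inl i') = if i = i' then 1 else 0 := by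
  by_cases h : i = i' <;> simp [layeredVisits, layeredTraj_inl_eq_inl_iff, h]

theorem layeredVisits_inl_inr (i : Fin k) (j : Fin (T - 1)) :
    layeredVisits k T (.inl i) (.inr j) = 1 := by
  simp [layeredVisits, layeredTraj_inl_eq_inr_iff]

theorem layeredOcc_inl (i' : Fin k) : layeredOcc k T (.inl i') = 1 / k := by
  simp [layeredOcc, layeredTraj_inl_eq_inl_iff, ite_and, mul_ite, Finset.sum_ite_irrel]

theorem layeredOcc_inr (hk : k ≠ 0) (j : Fin (T - 1)) : layeredOcc k T (.inr j) = 1 := by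
  simp [layeredOcc, layeredTraj_inl_eq_inr_iff, hk]

theorem sum_layeredVisits_inl (hT : 1 ≤ T) (i : Fin k) :
    ∑ s, layeredVisits k T (.inl i) s = T := by
  simp [Fintype.sum_sum_type, layeredVisits_inl_inl, layeredVisits_inl_inr, Nat.cast_sub hT]

theorem sum_layeredVisits_inl_sq_div_layeredOcc (hT : 1 ≤ T) (i : Fin k) :
    ∑ s, layeredVisits k T (.inl i) s ^ 2 / layeredOcc k T s = k + T - 1 := by
  have hk : k ≠ 0 := Fin.pos i |>.ne'
  simp [Fintype.sum_sum_type, layeredVisits_inl_inl, layeredVisits_inl_inr, layeredOcc_inl,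
    layeredOcc_inr hk, Nat.cast_sub hT]
  ring

end

/-- in the layered MRP with `k` starting states, a chain of length
`T − 1`, and i.i.d. rewards uniform on `[−1,1]` (one-step variance
`σ² = (∫_{-1}^{1} x² dx)/2 = 1/3` at every state), the asymptotic MC variance
at `s₀⁽¹⁾`, namely `E[Σ_t σ²(S_t) | S₀ = s₀⁽¹⁾]/ν(s₀⁽¹⁾)`, equals `kT/3`,
while the asymptotic TD variance `Σ_{s'} E[N(s')|S₀ = s₀⁽¹⁾]² σ²(s')/ν(s')`
equals `(k + T − 1)/3`. -/
theorem layered_mc_td_variances (k T : ℕ) (hk : 0 < k) (hT : 1 ≤ T) :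
    let σ2 : ℝ := (∫ x in (-1 : ℝ)..1, x ^ 2) / 2
    let start : Fin k ⊕ Fin (T - 1) := Sum.inl (⟨0, hk⟩ : Fin k)
    ((∑ s : Fin k ⊕ Fin (T - 1), layeredVisits k T start s * σ2) / layeredOcc k T start
        = (k : ℝ) * (T : ℝ) / 3) ∧
    (∑ s : Fin k ⊕ Fin (T - 1),
        (layeredVisits k T start s) ^ 2 * σ2 / layeredOcc k T s
      = ((k : ℝ) + (T : ℝ) - 1) / 3) := by
  have hσ2 : (∫ x in (-1 : ℝ)..1, x ^ 2) / 2 = 1 / 3 := by norm_num [integral_pow]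
  dsimp only
  simp_rw [hσ2, mul_div_right_comm _ (1 / 3 : ℝ), ← Finset.sum_mul,
    sum_layeredVisits_inl_sq_div_layeredOcc hT, sum_layeredVisits_inl hT, layeredOcc_inl]
  constructor <;> field_simp
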